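/- A positively homogeneous function p : ℝⁿ → ℝ is Lipschitz continuous with |p(x)| ≤ M‖x‖ structure if and only if there exists a constant M > 0 and a family Φ of sublinear functions, uniformly bounded by M (i.e. |φ(x)| ≤ M‖x‖ for all φ ∈ Φ and x), such that p(x) = inf_{φ∈Φ} φ(x) for all x. -/

import Mathlib

/-!
A sublinear function bounded by `M‖x‖` is subadditive, hence `M`-Lipschitz, and an infimum of
`M`-Lipschitz functions is `M`-Lipschitz. Conversely, if `p` is positively homogeneous and
`K`-Lipschitz, then for every `u` with `‖u‖ ≤ 1` the function
`x ↦ p u ⟪u, x⟫ + K ‖x - ⟪u, x⟫ u‖ + K (|⟪u, x⟫| - ⟪u, x⟫)` is sublinear, bounded by `5K‖x‖`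
and majorizes `p`: compare `p x` with `p` at the projection `⟪u, x⟫ u` of `x` on the line `ℝ u`.
For `u = x / ‖x‖` it agrees with `p` at `x`, so `p` is the infimum of these majorants.
-/

open Set Metric
open scoped RealInnerProductSpace NNReal

def PosHomogeneous {E : Type*} [SMul ℝ E] (φ : E → ℝ) : Prop :=
  ∀ (x : E) (l : ℝ), 0 < l → φ (l • x) = l * φ x

section VectorSpace

variable {E : Type*} [AddCommGroup E] [Module ℝ E] {φ : E → ℝ}

theorem PosHomogeneous.map_zero (hφ : PosHomogeneous φ) : φ 0 = 0 := by
  have h := hφ 0 2 two_pos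
  rw [smul_zero] at h
  linarith

theorem PosHomogeneous.map_smul_of_nonneg (hφ : PosHomogeneous φ) (x : E) {l : ℝ} (hl : 0 ≤ l) :
    φ (l • x) = l * φ x := by
  rcases hl.eq_or_lt with rfl | hl
  · rw [zero_smul, zero_mul, hφ.map_zero]
  · exact hφ x l hl

theorem PosHomogeneous.convexOn_univ_iff (hφ : PosHomogeneous φ) :
    ConvexOn ℝ univ φ ↔ ∀ x y, φ (x + y) ≤ φ x + φ y := by
  constructor
  · intro hconv x y
    have h := hconv.2 (mem_univ x) (mem_univ y) (by norm_num : (0 : ℝ) ≤ 1 / 2)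
      (by norm_num : (0 : ℝ) ≤ 1 / 2) (by norm_num)
    rw [← smul_add, hφ _ _ (by norm_num), smul_eq_mul, smul_eq_mul] at h
    linarith
  · intro hadd
    refine ⟨convex_univ, fun x _ y _ a b ha hb _ => ?_⟩
    calc φ (a • x + b • y) ≤ φ (a • x) + φ (b • y) := hadd _ _
      _ = a • φ x + b • φ y := by
        rw [hφ.map_smul_of_nonneg x ha, hφ.map_smul_of_nonneg y hb, smul_eq_mul, smul_eq_mul]

end VectorSpace

theorem lipschitzWith_of_subadditive_of_le_mul_norm {E : Type*} [SeminormedAddCommGroup E] {φ : E → ℝ} {M : ℝ≥0}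
    (hadd : ∀ x y, φ (x + y) ≤ φ x + φ y) (hle : ∀ x, φ x ≤ M * ‖x‖) : LipschitzWith M φ :=
  LipschitzWith.of_le_add_mul M fun x y =>
    calc φ x = φ (y + (x - y)) := by rw [add_sub_cancel]
      _ ≤ φ y + M * dist x y := by
        rw [dist_eq_norm]
        linarith [hadd y (x - y), hle (x - y)]

theorem LipschitzWith.ciInf {ι α : Type*} [Nonempty ι] [PseudoMetricSpace α] {f : ι → α → ℝ}
    {K : ℝ≥0} (hf : ∀ i, LipschitzWith K (f i)) (hbdd : ∀ x, BddBelow (range fun i => f i x)) :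
    LipschitzWith K fun x => ⨅ i, f i x :=
  LipschitzWith.of_le_add_mul K fun x y => by
    rw [← sub_le_iff_le_add]
    refine le_ciInf fun i => ?_
    linarith [ciInf_le (hbdd x) i, (hf i).le_add_mul x y]

section InnerProductSpace

variable {E : Type*} [NormedAddCommGroup E] [InnerProductSpace ℝ E]

def sublinearMajorant (p : E → ℝ) (C : ℝ) (u x : E) : ℝ :=
  p u * ⟪u, x⟫ + C * ‖x - ⟪u, x⟫ • u‖ + C * (|⟪u, x⟫| - ⟪u, x⟫)

variable {p : E → ℝ} {C : ℝ} {u : E}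

theorem posHomogeneous_sublinearMajorant : PosHomogeneous (sublinearMajorant p C u) := by
  intro x l hl
  have hproj : l • x - (l * ⟪u, x⟫) • u = l • (x - ⟪u, x⟫ • u) := by
    rw [smul_sub, mul_smul]
  simp only [sublinearMajorant, real_inner_smul_right, hproj, norm_smul, Real.norm_eq_abs,
    abs_mul, abs_of_pos hl]
  ring

theorem sublinearMajorant_add_le (hC : 0 ≤ C) (x y : E) :
    sublinearMajorant p C u (x + y) ≤ sublinearMajorant p C u x + sublinearMajorant p C u y := by
  have hproj : x + y - (⟪u, x⟫ + ⟪u, y⟫) • u = (x - ⟪u, x⟫ • u) + (y - ⟪u, y⟫ • u) := by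
    rw [add_smul]
    abel
  have hnorm := norm_add_le (x - ⟪u, x⟫ • u) (y - ⟪u, y⟫ • u)
  have habs := abs_add_le ⟪u, x⟫ ⟪u, y⟫
  simp only [sublinearMajorant, inner_add_right, hproj]
  nlinarith [mul_le_mul_of_nonneg_left hnorm hC, mul_le_mul_of_nonneg_left habs hC]

theorem convexOn_sublinearMajorant (hC : 0 ≤ C) : ConvexOn ℝ univ (sublinearMajorant p C u) :=
  posHomogeneous_sublinearMajorant.convexOn_univ_iff.mpr (sublinearMajorant_add_le hC)

theorem abs_sublinearMajorant_le (hu : ‖u‖ ≤ 1) (hpu : |p u| ≤ C) (x : E) :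
    |sublinearMajorant p C u x| ≤ 5 * C * ‖x‖ := by
  have hC : 0 ≤ C := (abs_nonneg _).trans hpu
  have hinner : |⟪u, x⟫| ≤ ‖x‖ :=
    (abs_real_inner_le_norm u x).trans (mul_le_of_le_one_left (norm_nonneg x) hu)
  have hproj : ‖x - ⟪u, x⟫ • u‖ ≤ 2 * ‖x‖ := by
    calc ‖x - ⟪u, x⟫ • u‖ ≤ ‖x‖ + |⟪u, x⟫| * ‖u‖ := by
          rw [← Real.norm_eq_abs, ← norm_smul]
          exact norm_sub_le _ _
      _ ≤ 2 * ‖x‖ := by nlinarith [abs_nonneg ⟪u, x⟫]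
  have hlin : |p u * ⟪u, x⟫| ≤ C * ‖x‖ := by
    rw [abs_mul]
    exact mul_le_mul hpu hinner (abs_nonneg _) hC
  have hsign := abs_le.mp hinner
  rw [abs_le] at hlin ⊢
  simp only [sublinearMajorant]
  constructor <;>
    nlinarith [mul_le_mul_of_nonneg_left hproj hC, mul_nonneg hC (norm_nonneg (x - ⟪u, x⟫ • u)),
      mul_nonneg hC (sub_nonneg.mpr (le_abs_self ⟪u, x⟫)), norm_nonneg x]

theorem le_sublinearMajorant {K : ℝ≥0} (hp : PosHomogeneous p) (hlip : LipschitzWith K p)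
    (hu : ‖u‖ ≤ 1) (x : E) : p x ≤ sublinearMajorant p K u x := by
  have hle_K : ∀ v : E, ‖v‖ ≤ 1 → p v ≤ K := fun v hv =>
    calc p v ≤ ‖p v‖ := Real.le_norm_self _
      _ ≤ K * ‖v‖ := hlip.norm_le_mul hp.map_zero v
      _ ≤ K := mul_le_of_le_one_right K.2 hv
  set t := ⟪u, x⟫
  have hray : p (t • u) ≤ p u * t + K * (|t| - t) := by
    rcases le_or_gt 0 t with ht | ht
    · rw [hp.map_smul_of_nonneg u ht, abs_of_nonneg ht]
      linarith
    · have hneg : p (t • u) = -t * p (-u) := by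
        rw [← hp.map_smul_of_nonneg (-u) (by linarith), smul_neg, neg_smul, neg_neg]
      rw [hneg, abs_of_neg ht]
      nlinarith [hle_K u hu, hle_K (-u) (by rwa [norm_neg])]
  have hclose : p x ≤ p (t • u) + K * ‖x - t • u‖ := by
    simpa only [dist_eq_norm] using hlip.le_add_mul x (t • u)
  simp only [sublinearMajorant]
  linarith

theorem sublinearMajorant_normalize_self (hp : PosHomogeneous p) (x : E) :
    sublinearMajorant p C (‖x‖⁻¹ • x) x = p x := by
  rcases eq_or_ne x 0 with rfl | hx
  · simp [sublinearMajorant, hp.map_zero]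
  have hnorm : ‖x‖ ≠ 0 := norm_ne_zero_iff.mpr hx
  have hinner : ⟪‖x‖⁻¹ • x, x⟫ = ‖x‖ := by
    rw [real_inner_smul_left, real_inner_self_eq_norm_sq]
    field_simp
  rw [sublinearMajorant, hinner, smul_inv_smul₀ hnorm, sub_self, norm_zero, abs_norm, sub_self,
    hp _ _ (inv_pos.mpr (norm_pos_iff.mpr hx))]
  field_simp
  ring

theorem iInf_sublinearMajorant {K : ℝ≥0} (hp : PosHomogeneous p) (hlip : LipschitzWith K p)
    (x : E) : ⨅ φ : sublinearMajorant p K '' closedBall 0 1, φ.1 x = p x := by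
  have hle : ∀ φ : sublinearMajorant p K '' closedBall 0 1, p x ≤ φ.1 x := by
    rintro ⟨_, u, hu, rfl⟩
    exact le_sublinearMajorant hp hlip (mem_closedBall_zero_iff.mp hu) x
  have hnormalize : ‖x‖⁻¹ • x ∈ closedBall (0 : E) 1 := by
    rw [mem_closedBall_zero_iff, norm_smul, norm_inv, norm_norm]
    exact inv_mul_le_one
  refine le_antisymm ?_ (le_ciInf hle)
  calc ⨅ φ : sublinearMajorant p K '' closedBall 0 1, φ.1 x
      ≤ sublinearMajorant p K (‖x‖⁻¹ • x) x :=
        ciInf_le ⟨p x, forall_mem_range.mpr hle⟩ ⟨_, mem_image_of_mem _ hnormalize⟩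
    _ = p x := sublinearMajorant_normalize_self hp x

end InnerProductSpace

theorem stmt_12 {n : ℕ} (p : EuclideanSpace ℝ (Fin n) → ℝ)
    (hph : ∀ (x : EuclideanSpace ℝ (Fin n)) (l : ℝ), 0 < l → p (l • x) = l * p x) :
    (∃ K : NNReal, LipschitzWith K p)
    ↔
    ∃ M : ℝ, 0 < M ∧
      ∃ Φ : Set (EuclideanSpace ℝ (Fin n) → ℝ), Φ.Nonempty ∧
        (∀ φ ∈ Φ,
          (∀ (x : EuclideanSpace ℝ (Fin n)) (l : ℝ), 0 < l → φ (l • x) = l * φ x) ∧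
          ConvexOn ℝ Set.univ φ ∧
          (∀ x : EuclideanSpace ℝ (Fin n), |φ x| ≤ M * ‖x‖)) ∧
        (∀ x, p x = ⨅ φ : Φ, φ.1 x) := by
  have hp : PosHomogeneous p := hph
  constructor
  · rintro ⟨K, hK⟩
    refine ⟨5 * K + 1, by positivity, sublinearMajorant p K '' closedBall 0 1,
      ⟨_, mem_image_of_mem _ (mem_closedBall_self zero_le_one)⟩, ?_, fun x => ?_⟩
    · rintro _ ⟨u, hu, rfl⟩
      rw [mem_closedBall_zero_iff] at hu
      have hpu : |p u| ≤ K := by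
        simpa using (hK.norm_le_mul hp.map_zero u).trans (mul_le_of_le_one_right K.2 hu)
      refine ⟨posHomogeneous_sublinearMajorant, convexOn_sublinearMajorant K.2, fun x => ?_⟩
      nlinarith [abs_sublinearMajorant_le hu hpu x, norm_nonneg x]
    · exact (iInf_sublinearMajorant hp hK x).symm
  · rintro ⟨M, hM, Φ, ⟨φ₀, hφ₀⟩, hΦ, hinf⟩
    have : Nonempty Φ := ⟨⟨φ₀, hφ₀⟩⟩
    have hlip : ∀ φ : Φ, LipschitzWith ⟨M, hM.le⟩ φ.1 := fun ⟨φ, hφ⟩ =>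
      let ⟨hhom, hconv, hbound⟩ := hΦ φ hφ
      lipschitzWith_of_subadditive_of_le_mul_norm ((PosHomogeneous.convexOn_univ_iff hhom).mp hconv)
        fun x => (le_abs_self _).trans (hbound x)
    have hbdd : ∀ x, BddBelow (range fun φ : Φ => φ.1 x) := fun x =>
      ⟨-(M * ‖x‖), forall_mem_range.mpr fun φ => neg_le_of_abs_le ((hΦ φ.1 φ.2).2.2 x)⟩
    exact ⟨_, funext hinf ▸ LipschitzWith.ciInf hlip hbdd⟩
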